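/- For every non-positive integer −n (n ∈ ℕ), the limit of Q(z) := (sin(πz)/(2π))·(ψ(z/2) − ψ((z+1)/2)) as z → −n equals −1. -/

import Mathlib

open Complex Filter Topology

noncomputable def digamma (z : ℂ) : ℂ := deriv Complex.Gamma z / Complex.Gamma z

noncomputable def Q (z : ℂ) : ℂ :=
  Complex.sin (Real.pi * z) / (2 * Real.pi) * (_root_.digamma (z / 2) - _root_.digamma ((z + 1) / 2))

/-!
The functional equation `ψ (z + 1) = ψ z + z⁻¹` carries the residue `-1` of `ψ` at `0`
to every non-positive integer `-m`. Near `-n`, exactly one of `z / 2`, `(z + 1) / 2`, say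
`(z + b) / 2`, tends to a pole `-m` of `ψ`, and there `(z + b) / 2 + m = (z + n) / 2`, so
`sin (π z) / (2π) · ψ ((z + b) / 2) = sin (π z) / (π (z + n)) · ((z + b) / 2 + m) ψ ((z + b) / 2)`
tends to `-(-1)ⁿ`, and it enters `Q` with sign `(-1)ⁿ`; the other term vanishes with `sin (π z)`.
-/

open scoped Real

theorem digamma_eq_complex_digamma : _root_.digamma = Complex.digamma := rfl

namespace Complex

theorem eventually_nhdsNE_ne_neg_natCast (x : ℂ) : ∀ᶠ z in 𝓝[≠] x, ∀ m : ℕ, z ≠ -(m : ℂ) :=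
  (Meromorphic.Gamma x).eventually_analyticAt.mono fun _ hz m hzm =>
    not_differentiableAt_Gamma_neg_nat m (hzm ▸ hz.differentiableAt)

theorem continuousAt_digamma {s : ℂ} (hs : ∀ m : ℕ, s ≠ -(m : ℂ)) : ContinuousAt digamma s := by
  have hgood : ∀ᶠ z in 𝓝 s, ∀ m : ℕ, z ≠ -(m : ℂ) := by
    rw [← nhdsNE_sup_pure s]
    exact eventually_sup.mpr ⟨eventually_nhdsNE_ne_neg_natCast s, hs⟩
  have hGamma : AnalyticAt ℂ Gamma s :=
    analyticAt_iff_eventually_differentiableAt.mpr (hgood.mono differentiableAt_Gamma)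
  exact hGamma.deriv.continuousAt.div hGamma.continuousAt (Gamma_ne_zero hs)

theorem tendsto_add_natCast_mul_digamma (m : ℕ) :
    Tendsto (fun z ↦ (z + m) * digamma z) (𝓝[≠] (-(m : ℂ))) (𝓝 (-1)) := by
  induction m with
  | zero =>
    have hreg : ContinuousAt (fun z ↦ z * digamma (z + 1)) 0 := by
      refine continuousAt_id.mul (ContinuousAt.comp (g := digamma) ?_ (by fun_prop))
      exact continuousAt_digamma fun m ↦ by
        rw [zero_add]; norm_cast; simp
    have hlim : Tendsto (fun z ↦ z * digamma (z + 1) - 1) (𝓝[≠] 0) (𝓝 (-1)) := by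
      simpa using (hreg.tendsto.mono_left nhdsWithin_le_nhds).sub_const 1
    simp only [Nat.cast_zero, neg_zero, add_zero]
    refine hlim.congr' ?_
    filter_upwards [eventually_nhdsNE_ne_neg_natCast 0] with z hz
    have hz0 : z ≠ 0 := by simpa using hz 0
    rw [digamma_apply_add_one z hz, mul_add, mul_inv_cancel₀ hz0,
      add_sub_cancel_right]
  | succ m ih =>
    have hshift : Tendsto (· + 1) (𝓝[≠] (-((m + 1 : ℕ) : ℂ))) (𝓝[≠] (-(m : ℂ))) := by
      have h := ((hasDerivAt_id' (-((m + 1 : ℕ) : ℂ))).add_const (1 : ℂ)).tendsto_nhdsNE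
        one_ne_zero
      rwa [show -((m + 1 : ℕ) : ℂ) + 1 = -m by push_cast; ring] at h
    have hvanish :
        Tendsto (fun z : ℂ ↦ (z + (m + 1 : ℕ)) / z) (𝓝[≠] (-((m + 1 : ℕ) : ℂ))) (𝓝 0) := by
      have hcont : ContinuousAt (fun z : ℂ ↦ (z + (m + 1 : ℕ)) / z) (-((m + 1 : ℕ) : ℂ)) := by
        fun_prop (disch := exact neg_ne_zero.mpr (Nat.cast_ne_zero.mpr m.succ_ne_zero))
      simpa using hcont.tendsto.mono_left nhdsWithin_le_nhds
    have hlim := (ih.comp hshift).sub hvanish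
    rw [sub_zero] at hlim
    refine hlim.congr' ?_
    filter_upwards [eventually_nhdsNE_ne_neg_natCast _] with z hz
    have hz0 : z ≠ 0 := by simpa using hz 0
    rw [Function.comp_apply, digamma_apply_add_one z hz]
    field_simp
    push_cast
    ring

theorem sin_pi_mul_natCast (n : ℕ) : sin (π * n) = 0 := by
  rw [mul_comm, sin_nat_mul_pi]

theorem tendsto_sin_pi_mul_div_add_natCast (n : ℕ) :
    Tendsto (fun z ↦ sin (π * z) / (z + n)) (𝓝[≠] (-(n : ℂ))) (𝓝 (π * (-1) ^ n)) := by
  have hderiv : HasDerivAt (fun z ↦ sin (π * z)) (π * (-1) ^ n) (-n) := by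
    have hcos : cos (π * n) = (-1) ^ n := by
      rw [mul_comm]
      exact_mod_cast congrArg ofReal (Real.cos_nat_mul_pi n)
    simpa [hcos, mul_comm] using ((hasDerivAt_id (-n : ℂ)).const_mul (π : ℂ)).csin
  refine (hasDerivAt_iff_tendsto_slope.mp hderiv).congr fun z ↦ ?_
  rw [slope_def_field, mul_neg, sin_neg, sin_pi_mul_natCast, neg_zero, sub_zero, sub_neg_eq_add]

variable (n : ℕ) (b : ℂ)

theorem tendsto_sin_mul_digamma_half_of_eq (m : ℕ) (hn : (n : ℂ) = 2 * m + b) :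
    Tendsto (fun z ↦ sin (π * z) / (2 * π) * digamma ((z + b) / 2)) (𝓝[≠] (-(n : ℂ)))
      (𝓝 (-(-1) ^ n)) := by
  have hhalf : Tendsto (fun z ↦ (z + b) / 2) (𝓝[≠] (-(n : ℂ))) (𝓝[≠] (-(m : ℂ))) := by
    have h := (((hasDerivAt_id' (-(n : ℂ))).add_const b).div_const 2).tendsto_nhdsNE
      (by norm_num)
    rwa [show (-(n : ℂ) + b) / 2 = -m by rw [hn]; ring] at h
  have hpi : (π : ℂ) ≠ 0 := ofReal_ne_zero.mpr Real.pi_ne_zero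
  have hlim := ((tendsto_sin_pi_mul_div_add_natCast n).mul
    ((tendsto_add_natCast_mul_digamma m).comp hhalf)).div_const (π : ℂ)
  rw [mul_neg_one, neg_div, mul_div_cancel_left₀ _ hpi] at hlim
  refine hlim.congr' ?_
  filter_upwards [self_mem_nhdsWithin] with z hz
  have hzn : z + n ≠ 0 := fun h ↦ hz (eq_neg_of_add_eq_zero_left h)
  rw [Function.comp_apply, show (z + b) / 2 + m = (z + n) / 2 by rw [hn]; ring]
  field_simp

theorem tendsto_sin_mul_digamma_half_of_ne (hn : ∀ j : ℕ, (n : ℂ) ≠ 2 * j + b) :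
    Tendsto (fun z ↦ sin (π * z) / (2 * π) * digamma ((z + b) / 2)) (𝓝 (-(n : ℂ))) (𝓝 0) := by
  have hreg : ∀ j : ℕ, (-(n : ℂ) + b) / 2 ≠ -j := fun j h ↦ hn j (by linear_combination -2 * h)
  have hcont : ContinuousAt (fun z ↦ sin (π * z) / (2 * π) * digamma ((z + b) / 2)) (-(n : ℂ)) :=
    (by fun_prop : ContinuousAt (fun z : ℂ ↦ sin (π * z) / (2 * π)) _).mul
      (ContinuousAt.comp (g := digamma) (continuousAt_digamma hreg) (by fun_prop))
  simpa [sin_pi_mul_natCast] using hcont.tendsto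

end Complex

theorem Q_limit_neg_one (n : ℕ) :
    Tendsto Q (𝓝[≠] (-(n : ℂ))) (𝓝 (-1)) := by
  have hQ : ∀ z, Q z = sin (π * z) / (2 * π) * Complex.digamma ((z + 0) / 2) -
      sin (π * z) / (2 * π) * Complex.digamma ((z + 1) / 2) := fun z ↦ by
    rw [Q, digamma_eq_complex_digamma, add_zero, mul_sub]
  refine Tendsto.congr (fun z ↦ (hQ z).symm) ?_
  rcases Nat.even_or_odd' n with ⟨m, rfl | rfl⟩
  · have hpole := tendsto_sin_mul_digamma_half_of_eq (2 * m) 0 m (by push_cast; ring)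
    have hreg := tendsto_sin_mul_digamma_half_of_ne (2 * m) 1 fun j h ↦ by norm_cast at h; omega
    simpa using hpole.sub (hreg.mono_left nhdsWithin_le_nhds)
  · have hpole := tendsto_sin_mul_digamma_half_of_eq (2 * m + 1) 1 m (by push_cast; ring)
    have hreg := tendsto_sin_mul_digamma_half_of_ne (2 * m + 1) 0 fun j h ↦ by norm_cast at h; omega
    simpa [pow_succ] using (hreg.mono_left nhdsWithin_le_nhds).sub hpole
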